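/- The set of derivations of the Leibniz algebra L₃ is a linear subspace of End(V) of dimension 5. -/

import Mathlib

/-!
Since `e₃ = ⟦e₁,e₁⟧` and `e₄ = ⟦e₃,e₁⟧`, the Leibniz rule expresses `d(e₃)` and `d(e₄)` through
`d(e₁)`, and the relations `⟦e₁,e₂⟧ = 0`, `⟦e₂,e₁⟧ = ⟦e₁,e₁⟧` fix all coordinates of `d(e₂)` but the
`e₄`-one. So a derivation is determined by the five numbers `d(e₁)` and `d(e₂)₄`, and a direct check
shows that every choice of them occurs.
-/

/-- `V = ℂ⁴`. -/
abbrev V : Type := Fin 4 → ℂ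

/-- standard basis: `e 0 = e₁`, ..., `e 3 = e₄`. -/
def e (i : Fin 4) : V := Pi.single i 1

/-- Bracket of the Leibniz algebra `L₃`:
`⟦e₁,e₁⟧ = e₃`, `⟦e₂,e₁⟧ = e₃`, `⟦e₃,e₁⟧ = e₄`, all other basis products zero. -/
def br (x y : V) : V :=
  (x 0 * y 0 + x 1 * y 0) • e 2 + (x 2 * y 0) • e 3

/-- A derivation. -/
def IsDer (d : V →ₗ[ℂ] V) : Prop :=
  ∀ x y : V, d (br x y) = br (d x) y + br x (d y)

section derivationSubmodule

variable {R M : Type*} [CommSemiring R] [AddCommMonoid M] [Module R M]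

def derivationSubmodule (B : M →ₗ[R] M →ₗ[R] M) : Submodule R (Module.End R M) where
  carrier := {d | ∀ x y, d (B x y) = B (d x) y + B x (d y)}
  zero_mem' := by simp
  add_mem' {d₁ d₂} h₁ h₂ x y := by
    simp only [LinearMap.add_apply, map_add, h₁ x y, h₂ x y]
    abel
  smul_mem' c d h x y := by
    simp only [LinearMap.smul_apply, map_smul, h x y, smul_add]

end derivationSubmodule

def brLinear : V →ₗ[ℂ] V →ₗ[ℂ] V :=
  LinearMap.mk₂ ℂ br
    (fun x x' y => by ext k; simp [br]; ring)
    (fun c x y => by ext k; simp [br]; ring)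
    (fun x y y' => by ext k; simp [br]; ring)
    (fun c x y => by ext k; simp [br]; ring)

theorem mem_derivationSubmodule_brLinear {d : Module.End ℂ V} :
    d ∈ derivationSubmodule brLinear ↔ IsDer d :=
  Iff.rfl

theorem e_apply (i j : Fin 4) : e i j = if j = i then 1 else 0 :=
  Pi.single_apply i 1 j

theorem br_e_zero_e_zero : br (e 0) (e 0) = e 2 := by
  ext k; fin_cases k <;> simp [br, e_apply]

theorem br_e_one_e_zero : br (e 1) (e 0) = e 2 := by
  ext k; fin_cases k <;> simp [br, e_apply]

theorem br_e_two_e_zero : br (e 2) (e 0) = e 3 := by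
  ext k; fin_cases k <;> simp [br, e_apply]

def derivParam (c : Fin 5 → ℂ) : Module.End ℂ V :=
  Matrix.toLin' !![c 0, 0,         0,             0;
                   c 1, c 0 + c 1, 0,             0;
                   c 2, c 2,       2 * c 0 + c 1, 0;
                   c 3, c 4,       c 2,           3 * c 0 + c 1]

theorem isDer_derivParam (c : Fin 5 → ℂ) : IsDer (derivParam c) := by
  intro x y
  ext k
  fin_cases k <;> simp [derivParam, br, e, Matrix.mulVec, dotProduct, Fin.sum_univ_four] <;> ring

def derivCoords : Module.End ℂ V →ₗ[ℂ] (Fin 5 → ℂ) where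
  toFun d := ![d (e 0) 0, d (e 0) 1, d (e 0) 2, d (e 0) 3, d (e 1) 3]
  map_add' d₁ d₂ := by ext j; fin_cases j <;> simp
  map_smul' c d := by ext j; fin_cases j <;> simp

theorem derivCoords_derivParam (c : Fin 5 → ℂ) : derivCoords (derivParam c) = c := by
  ext j
  fin_cases j <;> simp [derivCoords, derivParam, e]

namespace IsDer

variable {d : Module.End ℂ V} (hd : IsDer d)
include hd

theorem apply_e_two : d (e 2) = ![0, 0, 2 * d (e 0) 0 + d (e 0) 1, d (e 0) 2] := by
  rw [← br_e_zero_e_zero, hd]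
  ext k; fin_cases k <;> simp [br, e_apply]; ring

theorem apply_e_one : d (e 1) = ![0, d (e 0) 0 + d (e 0) 1, d (e 0) 2, d (e 1) 3] := by
  have h₀ : d (e 1) 0 = 0 := by
    simpa [br, e_apply] using (congrFun (hd (e 0) (e 1)) 2).symm
  have h₁₀ := hd (e 1) (e 0)
  rw [br_e_one_e_zero, apply_e_two hd] at h₁₀
  have h₁ : d (e 1) 1 = d (e 0) 0 + d (e 0) 1 := by
    have h := congrFun h₁₀ 2
    simp [br, e_apply] at h
    linear_combination -h₀ - h
  have h₂ : d (e 1) 2 = d (e 0) 2 := by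
    simpa [br, e_apply] using (congrFun h₁₀ 3).symm
  ext k; fin_cases k <;> simp [h₀, h₁, h₂]

theorem apply_e_three : d (e 3) = ![0, 0, 0, 3 * d (e 0) 0 + d (e 0) 1] := by
  rw [← br_e_two_e_zero, hd, apply_e_two hd]
  ext k; fin_cases k <;> simp [br, e_apply]; ring

theorem eq_derivParam_derivCoords : d = derivParam (derivCoords d) := by
  refine (Pi.basisFun ℂ (Fin 4)).ext fun j => ?_
  rw [Pi.basisFun_apply, ← e]
  fin_cases j <;> simp only [Fin.zero_eta, Fin.mk_one, Fin.reduceFinMk]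
  · ext k; fin_cases k <;> simp [derivParam, derivCoords, e]
  · rw [apply_e_one hd]; ext k; fin_cases k <;> simp [derivParam, derivCoords, e]
  · rw [apply_e_two hd]; ext k; fin_cases k <;> simp [derivParam, derivCoords, e]
  · rw [apply_e_three hd]; ext k; fin_cases k <;> simp [derivParam, derivCoords, e]

end IsDer

noncomputable def derivationsEquivParams : derivationSubmodule brLinear ≃ₗ[ℂ] (Fin 5 → ℂ) :=
  LinearEquiv.ofBijective (derivCoords ∘ₗ (derivationSubmodule brLinear).subtype)
    ⟨fun d₁ d₂ h => Subtype.ext <| calc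
        (d₁ : Module.End ℂ V) = derivParam (derivCoords d₁) :=
          (mem_derivationSubmodule_brLinear.mp d₁.2).eq_derivParam_derivCoords
        _ = derivParam (derivCoords d₂) := congrArg derivParam h
        _ = d₂ :=
          (mem_derivationSubmodule_brLinear.mp d₂.2).eq_derivParam_derivCoords.symm,
      fun c => ⟨⟨derivParam c, isDer_derivParam c⟩, derivCoords_derivParam c⟩⟩

theorem derivations_of_L3 :
    ∃ S : Submodule ℂ (V →ₗ[ℂ] V),
      (S : Set (V →ₗ[ℂ] V)) = {d | IsDer d} ∧ Module.finrank ℂ S = 5 :=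
  ⟨derivationSubmodule brLinear, rfl, by
    rw [derivationsEquivParams.finrank_eq, Module.finrank_fin_fun]⟩
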